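/- In misère NimG-RM on a graph with no null-weight vertices where the underlying graph is bipartite with parts L and R and the starting vertex u lies in L, if M is a maximum matching covering u, then the following strategy is winning for the first player: on each turn, remove all tokens from the current vertex and move along the edge of M incident to the current vertex. Moreover, following this strategy the first player is never stuck on an unvisited vertex uncovered by M (such a situation would yield a maximum matching of G not covering u, contradicting the hypothesis that all maximum matchings cover u). -/

import Mathlib

/-!
The first player empties the current vertex and moves to its `M`-partner. Since the graph is
bipartite, the second player always moves to an `L`-vertex, and the visited ones are empty, so
moving there loses at once. If the second player reaches a fresh vertex `y` not covered by `M`,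
the play so far is an `M`-alternating path from `u` to `y`, and flipping it gives a maximum
matching missing `u`. So `y` has an `M`-partner and the strategy goes on; each round lowers the
total weight, so the play ends with the second player losing.
-/

universe u
mutual
  inductive GNormalWin {α : Type u} (moves : α → α → Prop) : α → Prop
    | step {p q : α} : moves p q → GNormalLose moves q → GNormalWin moves p
  inductive GNormalLose {α : Type u} (moves : α → α → Prop) : α → Prop
    | intro {p : α} : (∀ q, moves p q → GNormalWin moves q) → GNormalLose moves p
end

mutual
  inductive GMisereWin {α : Type u} (moves : α → α → Prop) : α → Prop
    | terminal {p : α} : (∀ q, ¬ moves p q) → GMisereWin moves p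
    | step {p q : α} : moves p q → GMisereLose moves q → GMisereWin moves p
  inductive GMisereLose {α : Type u} (moves : α → α → Prop) : α → Prop
    | intro {p q₀ : α} : moves p q₀ → (∀ q, moves p q → GMisereWin moves q) → GMisereLose moves p
end

def nimMove {V : Type u} (adj : V → V → Prop) (p q : V × (V → ℕ)) : Prop :=
  adj p.1 q.1 ∧ q.2 p.1 < p.2 p.1 ∧ ∀ v, v ≠ p.1 → q.2 v = p.2 v

mutual
  inductive NimRMWin {V : Type u} (adj : V → V → Prop) : V × (V → ℕ) → Prop
    | zero {p} : p.2 p.1 = 0 → NimRMWin adj p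
    | step {p q} : nimMove adj p q → NimRMLose adj q → NimRMWin adj p
  inductive NimRMLose {V : Type u} (adj : V → V → Prop) : V × (V → ℕ) → Prop
    | intro {p} : p.2 p.1 ≠ 0 → (∀ q, nimMove adj p q → NimRMWin adj q) → NimRMLose adj p
end

def vgMove {V : Type u} (A : V → V → Prop) (p q : Set V × V) : Prop :=
  A p.2 q.2 ∧ q.2 ∈ p.1 ∧ q.2 ≠ p.2 ∧ q.1 = p.1 \ {p.2}

def addOut {V : Type u} (A : V → V → Prop) : V ⊕ V → V ⊕ V → Prop
  | .inl a, .inl b => A a b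
  | .inl a, .inr b => a = b
  | _, _ => False

def MaxMatching {V : Type u} (G : SimpleGraph V) (M : G.Subgraph) : Prop :=
  M.IsMatching ∧ ∀ N : G.Subgraph, N.IsMatching → N.edgeSet.ncard ≤ M.edgeSet.ncard

namespace SimpleGraph.Subgraph
variable {V : Type*} {G : SimpleGraph V} {H N : G.Subgraph} {a c z x : V}
open Set

lemma sup_subgraphOfAdj_adj_of_ne (h : G.Adj a c) (hza : z ≠ a) (hzc : z ≠ c) :
    (H ⊔ G.subgraphOfAdj h).Adj z x ↔ H.Adj z x := by
  rw [sup_adj, subgraphOfAdj_adj, Sym2.eq_iff]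
  exact or_iff_left (by rintro (⟨rfl, -⟩ | ⟨-, rfl⟩) <;> simp_all)

lemma IsMatching.sup_subgraphOfAdj (hN : N.IsMatching) (ha : a ∉ N.verts) (hc : c ∉ N.verts)
    (h : G.Adj a c) : (N ⊔ G.subgraphOfAdj h).IsMatching := by
  refine hN.sup (.subgraphOfAdj h) ?_
  rw [hN.support_eq_verts, (IsMatching.subgraphOfAdj h).support_eq_verts, subgraphOfAdj_verts]
  simp [ha, hc]

lemma ncard_edgeSet_sup_subgraphOfAdj [Finite V] (ha : a ∉ N.verts) (h : G.Adj a c) :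
    (N ⊔ G.subgraphOfAdj h).edgeSet.ncard = N.edgeSet.ncard + 1 := by
  rw [edgeSet_sup, edgeSet_subgraphOfAdj, union_singleton,
    ncard_insert_of_notMem (fun he : s(a, c) ∈ N.edgeSet => ha (N.edge_vert he)) (toFinite _)]

lemma IsMatching.notMem_pair_of_adj (hN : N.IsMatching) (h : N.Adj a c)
    (hz : z ∉ ({a, c} : Set V)) (hzx : N.Adj z x) : x ∉ ({a, c} : Set V) := by
  rintro (rfl | rfl)
  · exact hz (.inr (hN.eq_of_adj_right hzx h.symm))
  · exact hz (.inl (hN.eq_of_adj_right hzx h))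

lemma IsMatching.deleteVerts_pair_adj_iff (hN : N.IsMatching) (h : N.Adj a c)
    (hz : z ∉ ({a, c} : Set V)) : (N.deleteVerts {a, c}).Adj z x ↔ N.Adj z x := by
  rw [deleteVerts_adj]
  exact ⟨fun hzx => hzx.2.2.2.2, fun hzx =>
    ⟨N.edge_vert hzx, hz, N.edge_vert hzx.symm, hN.notMem_pair_of_adj h hz hzx, hzx⟩⟩

lemma IsMatching.deleteVerts_pair (hN : N.IsMatching) (h : N.Adj a c) :
    (N.deleteVerts {a, c}).IsMatching := fun z hz => by
  simpa only [hN.deleteVerts_pair_adj_iff h hz.2] using hN hz.1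

lemma IsMatching.edgeSet_deleteVerts_pair (hN : N.IsMatching) (h : N.Adj a c) :
    (N.deleteVerts {a, c}).edgeSet = N.edgeSet \ {s(a, c)} := by
  ext e
  induction e using Sym2.ind with
  | _ x y =>
    rw [mem_sdiff, Subgraph.mem_edgeSet, Subgraph.mem_edgeSet, deleteVerts_adj, mem_singleton_iff,
      Sym2.eq_iff]
    constructor
    · rintro ⟨-, hx, -, -, hxy⟩
      refine ⟨hxy, ?_⟩
      rintro (⟨rfl, -⟩ | ⟨rfl, -⟩) <;> simp at hx
    · rintro ⟨hxy, hne⟩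
      have hx : x ∉ ({a, c} : Set V) := by
        rintro (rfl | rfl)
        · exact hne (.inl ⟨rfl, hN.eq_of_adj_left hxy h⟩)
        · exact hne (.inr ⟨rfl, hN.eq_of_adj_left hxy h.symm⟩)
      exact ⟨N.edge_vert hxy, hx, N.edge_vert hxy.symm, hN.notMem_pair_of_adj h hx hxy, hxy⟩

lemma IsMatching.ncard_edgeSet_deleteVerts_pair [Finite V] (hN : N.IsMatching) (h : N.Adj a c) :
    (N.deleteVerts {a, c}).edgeSet.ncard + 1 = N.edgeSet.ncard := by
  rw [hN.edgeSet_deleteVerts_pair h,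
    ncard_sdiff_singleton_add_one (show s(a, c) ∈ N.edgeSet from h) (toFinite _)]

end SimpleGraph.Subgraph

lemma MaxMatching.of_ncard_edgeSet_eq {V : Type*} {G : SimpleGraph V} {M N : G.Subgraph}
    (hM : MaxMatching G M) (hN : N.IsMatching) (h : N.edgeSet.ncard = M.edgeSet.ncard) :
    MaxMatching G N :=
  ⟨hN, fun P hP => (hM.2 P hP).trans h.ge⟩

section NimMove
variable {V : Type*} {adj : V → V → Prop}

lemma nimMove_update_zero [DecidableEq V] {x y : V} {f : V → ℕ} (h : adj x y) (hx : f x ≠ 0) :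
    nimMove adj (x, f) (y, Function.update f x 0) :=
  ⟨h, by simpa [Nat.pos_iff_ne_zero] using hx, fun _ hz => Function.update_of_ne hz _ _⟩

lemma nimMove.apply_lt {x y : V} {f g : V → ℕ} (h : nimMove adj (x, f) (y, g)) : g x < f x :=
  h.2.1

lemma nimMove.apply_eq {x y z : V} {f g : V → ℕ} (h : nimMove adj (x, f) (y, g)) (hz : z ≠ x) :
    g z = f z :=
  h.2.2 z hz

lemma nimMove.sum_lt [Fintype V] {p q : V × (V → ℕ)} (h : nimMove adj p q) :
    ∑ z, q.2 z < ∑ z, p.2 z := by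
  refine Finset.sum_lt_sum (fun z _ => ?_) ⟨p.1, Finset.mem_univ _, h.2.1⟩
  by_cases hz : z = p.1
  · exact hz ▸ h.2.1.le
  · exact (h.2.2 z hz).le

end NimMove

section Strategy
variable {V : Type*} {G : SimpleGraph V} {L R : Set V} {M N : G.Subgraph} {w w' : V → ℕ} {u v : V}

/-- The position `(v, w')` just after the first player has moved along `M` to `v ∈ R`. The matching
`N` is `M` with the alternating path played so far flipped and its last `M`-edge removed; the
vertices not visited yet are those with `w' z = w z`. -/
structure MatchingStrategyState (G : SimpleGraph V) (L R : Set V) (M : G.Subgraph) (w : V → ℕ)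
    (u : V) (N : G.Subgraph) (v : V) (w' : V → ℕ) : Prop where
  isMatching : N.IsMatching
  ncard_add_one : N.edgeSet.ncard + 1 = M.edgeSet.ncard
  start_notMem : u ∉ N.verts
  notMem : v ∉ N.verts
  mem_right : v ∈ R
  start_eq_zero : w' u = 0
  eq_self : w' v = w v
  eq_of_mem_left : ∀ z ∈ L, w' z ≠ 0 → w' z = w z
  adj_iff : ∀ z, z ≠ v → w' z = w z → ∀ c, N.Adj z c ↔ M.Adj z c
  eq_of_adj : ∀ z c, z ≠ v → w' z = w z → M.Adj z c → w' c = w c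

lemma matchingStrategyState_start [DecidableEq V] [Finite V] (hw : ∀ z, 0 < w z)
    (hM : M.IsMatching) (hedge : ∀ a b, G.Adj a b → (a ∈ L ↔ b ∈ R)) (hu : u ∈ L)
    (huv : M.Adj u v) :
    MatchingStrategyState G L R M w u (M.deleteVerts {u, v}) v (Function.update w u 0) := by
  have hne : ∀ z, Function.update w u 0 z = w z → z ≠ u := by
    rintro z hz rfl
    simp [(hw z).ne] at hz
  refine ⟨hM.deleteVerts_pair huv, hM.ncard_edgeSet_deleteVerts_pair huv, by simp, by simp,
    (hedge u v (M.adj_sub huv)).mp hu, Function.update_self _ _ _,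
    Function.update_of_ne huv.ne.symm _ _, ?_, ?_, ?_⟩
  · intro z _ hz
    exact Function.update_of_ne (by rintro rfl; simp at hz) _ _
  · intro z hzv hz c
    exact hM.deleteVerts_pair_adj_iff huv (by simp [hne z hz, hzv])
  · intro z c hzv hz hzc
    have hc := hM.notMem_pair_of_adj huv (by simp [hne z hz, hzv]) hzc
    exact Function.update_of_ne (by rintro rfl; simp at hc) _ _

namespace MatchingStrategyState

variable (hS : MatchingStrategyState G L R M w u N v w')
include hS

lemma start_ne (hw : ∀ z, 0 < w z) : u ≠ v := fun h =>
  (hw v).ne' (by rw [← hS.eq_self, ← h, hS.start_eq_zero])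

/-- If the second player could reach an unvisited vertex `y` not covered by `M`, then adding the
edge `vy` to `N` would give a maximum matching that misses `u`. -/
lemma mem_verts_of_adj [Finite V] (hw : ∀ z, 0 < w z) (hM : MaxMatching G M)
    (hall : ∀ N : G.Subgraph, MaxMatching G N → u ∈ N.verts) {y : V} (hvy : G.Adj v y)
    (hyL : y ∈ L) (hy : w' y ≠ 0) : y ∈ M.verts := by
  by_contra hyM
  have hyN : y ∉ N.verts := fun hyN =>
    have ⟨c, hyc, _⟩ := hS.isMatching hyN
    hyM (M.edge_vert ((hS.adj_iff y hvy.ne.symm (hS.eq_of_mem_left y hyL hy) c).mp hyc))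
  have hmax : MaxMatching G (N ⊔ G.subgraphOfAdj hvy) :=
    hM.of_ncard_edgeSet_eq (hS.isMatching.sup_subgraphOfAdj hS.notMem hyN hvy)
      (by rw [SimpleGraph.Subgraph.ncard_edgeSet_sup_subgraphOfAdj hS.notMem, hS.ncard_add_one])
  have huy : u ≠ y := fun h => hy (h ▸ hS.start_eq_zero)
  simpa [hS.start_notMem, hS.start_ne hw, huy] using hall _ hmax

lemma eq_of_update_eq [DecidableEq V] (hw : ∀ z, 0 < w z) {y z : V} {w₃ : V → ℕ}
    (hmove : nimMove G.Adj (v, w') (y, w₃)) (hz : Function.update w₃ y 0 z = w z) :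
    z ≠ y ∧ z ≠ v ∧ w' z = w z := by
  have hzy : z ≠ y := by rintro rfl; simp [(hw z).ne] at hz
  rw [Function.update_of_ne hzy] at hz
  have hzv : z ≠ v := by
    rintro rfl
    exact hmove.apply_lt.ne (hz.trans hS.eq_self.symm)
  exact ⟨hzy, hzv, hmove.apply_eq hzv ▸ hz⟩

lemma next [DecidableEq V] [Finite V] (hw : ∀ z, 0 < w z) (hM : M.IsMatching)
    (hpart : ∀ z, z ∈ L ↔ z ∉ R) {y b : V} {w₃ : V → ℕ} (hmove : nimMove G.Adj (v, w') (y, w₃))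
    (hyL : y ∈ L) (hy : w₃ y ≠ 0) (hyb : M.Adj y b) (hbR : b ∈ R) :
    MatchingStrategyState G L R M w u (N.deleteVerts {y, b} ⊔ G.subgraphOfAdj hmove.1) b
      (Function.update w₃ y 0) := by
  have hvy : G.Adj v y := hmove.1
  have hyv : y ≠ v := hvy.ne.symm
  have hupd : ∀ z, z ≠ y → z ≠ v → Function.update w₃ y 0 z = w' z := fun z hzy hzv => by
    rw [Function.update_of_ne hzy, hmove.apply_eq hzv]
  have hy' : w' y = w y := hS.eq_of_mem_left y hyL (hmove.apply_eq hyv ▸ hy)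
  have hyN : N.Adj y b := (hS.adj_iff y hyv hy' b).mpr hyb
  have hbv : b ≠ v := fun h => hS.notMem (h ▸ N.edge_vert hyN.symm)
  have hby : b ≠ y := hyb.ne.symm
  have hdel : v ∉ (N.deleteVerts {y, b}).verts := fun h => hS.notMem h.1
  have huy : u ≠ y := fun h => hy (by rw [← h, hmove.apply_eq (hS.start_ne hw), hS.start_eq_zero])
  refine ⟨(hS.isMatching.deleteVerts_pair hyN).sup_subgraphOfAdj hdel (fun h => h.2 (.inl rfl)) hvy,
    ?_, by simp [hS.start_notMem, hS.start_ne hw, huy], by simp [hbv, hby], hbR, ?_, ?_, ?_, ?_, ?_⟩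
  · rw [SimpleGraph.Subgraph.ncard_edgeSet_sup_subgraphOfAdj hdel,
      hS.isMatching.ncard_edgeSet_deleteVerts_pair hyN, hS.ncard_add_one]
  · rw [hupd u huy (hS.start_ne hw), hS.start_eq_zero]
  · rw [hupd b hby hbv, hS.eq_of_adj y b hyv hy' hyb]
  · intro z hzL hz
    have hzy : z ≠ y := by rintro rfl; simp at hz
    have hzv : z ≠ v := by rintro rfl; exact (hpart z).mp hzL hS.mem_right
    rw [hupd z hzy hzv] at hz ⊢
    exact hS.eq_of_mem_left z hzL hz
  · intro z hzb hz c
    obtain ⟨hzy, hzv, hz'⟩ := hS.eq_of_update_eq hw hmove hz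
    rw [SimpleGraph.Subgraph.sup_subgraphOfAdj_adj_of_ne hvy hzv hzy,
      hS.isMatching.deleteVerts_pair_adj_iff hyN (by simp [hzy, hzb]), hS.adj_iff z hzv hz' c]
  · intro z c hzb hz hzc
    obtain ⟨hzy, hzv, hz'⟩ := hS.eq_of_update_eq hw hmove hz
    have hcy : c ≠ y := fun h => hzb (hM.eq_of_adj_right (h ▸ hzc) hyb.symm)
    have hcv : c ≠ v := fun h =>
      hS.notMem (h ▸ N.edge_vert ((hS.adj_iff z hzv hz' c).mpr hzc).symm)
    rw [hupd c hcy hcv, hS.eq_of_adj z c hzv hz' hzc]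

theorem nimRMLose [Fintype V] [DecidableEq V] (hw : ∀ z, 0 < w z) (hM : MaxMatching G M)
    (hall : ∀ N : G.Subgraph, MaxMatching G N → u ∈ N.verts) (hpart : ∀ z, z ∈ L ↔ z ∉ R)
    (hedge : ∀ a b, G.Adj a b → (a ∈ L ↔ b ∈ R)) : NimRMLose G.Adj (v, w') := by
  induction hsum : ∑ z, w' z using Nat.strong_induction_on generalizing N v w' with
  | _ n ih =>
    refine NimRMLose.intro (show w' v ≠ 0 by rw [hS.eq_self]; exact (hw v).ne') ?_
    rintro ⟨y, w₃⟩ hmove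
    by_cases hy : w₃ y = 0
    · exact .zero hy
    have hyL : y ∈ L := (hpart y).mpr fun hyR =>
      (hpart v).mp ((hedge v y hmove.1).mpr hyR) hS.mem_right
    obtain ⟨b, hyb, -⟩ := hM.1 <|
      hS.mem_verts_of_adj hw hM hall hmove.1 hyL (hmove.apply_eq hmove.1.ne.symm ▸ hy)
    have hanswer := nimMove_update_zero (M.adj_sub hyb) hy
    exact .step hanswer (ih _ (hsum ▸ hanswer.sum_lt.trans hmove.sum_lt)
      (hS.next hw hM.1 hpart hmove hyL hy hyb ((hedge y b (M.adj_sub hyb)).mp hyL)) rfl)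

end MatchingStrategyState

end Strategy

/-- Misère NimG-RM on a bipartite graph (parts `L`, `R`, start `u ∈ L`) with positive
weights: if `M` is a maximum matching covering `u` and indeed every maximum matching covers
`u`, then the first player wins (following the matching `M` is a winning strategy). -/
theorem stmt8 {V : Type} [Fintype V] (G : SimpleGraph V) (L R : Set V)
    (hpart : ∀ v, v ∈ L ↔ v ∉ R) (hedge : ∀ a b, G.Adj a b → (a ∈ L ↔ b ∈ R))
    (w : V → ℕ) (hw : ∀ v, 0 < w v) (u : V) (hu : u ∈ L)
    (M : G.Subgraph) (hM : MaxMatching G M) (hMu : u ∈ M.verts)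
    (hall : ∀ N : G.Subgraph, MaxMatching G N → u ∈ N.verts) :
    NimRMWin G.Adj (u, w) := by
  classical
  obtain ⟨v, huv, -⟩ := hM.1 hMu
  exact .step (nimMove_update_zero (M.adj_sub huv) (hw u).ne')
    ((matchingStrategyState_start hw hM.1 hedge hu huv).nimRMLose hw hM hall hpart hedge)
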